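/- Let μ be a real number. Then for all x ∈ (0,∞), the operator A² applied to the function x ↦ x^μ satisfies (A² (·^μ))(x) = d²⁺⁺(μ) x^{μ+2} + d²⁺(μ) x^{μ+1} + d²⁰(μ) x^{μ} + d²⁻(μ) x^{μ−1} + d²⁻⁻(μ) x^{μ−2}. -/

import Mathlib

noncomputable def qp (q r : ℝ) : ℂ := ((q ^ r : ℝ) : ℂ)

noncomputable def A2 (q h1 h2 h3 h4 l1 l2 l3 l4 : ℝ) (t1 t2 t3 t4 : ℂ) (g : ℝ → ℂ) (x : ℝ) : ℂ :=
  ((x : ℂ) ^ 2)⁻¹ * ((x : ℂ) - qp q (h1 + 1/2) * t1) * ((x : ℂ) - qp q (h2 + 1/2) * t2)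
      * ((x : ℂ) - qp q (h3 + 1/2) * t3) * ((x : ℂ) - qp q (h4 + 1/2) * t4) * g (x / q)
    + ((x : ℂ) ^ 2)⁻¹ * ((x : ℂ) - qp q (l1 - 1/2) * t1) * ((x : ℂ) - qp q (l2 - 1/2) * t2)
      * ((x : ℂ) - qp q (l3 - 1/2) * t3) * ((x : ℂ) - qp q (l4 - 1/2) * t4) * g (q * x)
    + (-(qp q (1/2) + qp q (-(1/2))) * (x : ℂ) ^ 2
        + ((qp q h1 + qp q l1) * t1 + (qp q h2 + qp q l2) * t2 + (qp q h3 + qp q l3) * t3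
            + (qp q h4 + qp q l4) * t4) * (x : ℂ)
        + qp q ((h1 + l1) / 2) * t1 * (qp q ((h2 + l2) / 2) * t2) * (qp q ((h3 + l3) / 2) * t3)
          * (qp q ((h4 + l4) / 2) * t4)
          * (-(qp q (1/2) + qp q (-(1/2))) * ((x : ℂ) ^ 2)⁻¹
              + (qp q (-h1) * t1⁻¹ + qp q (-l1) * t1⁻¹ + qp q (-h2) * t2⁻¹ + qp q (-l2) * t2⁻¹
                  + qp q (-h3) * t3⁻¹ + qp q (-l3) * t3⁻¹ + qp q (-h4) * t4⁻¹ + qp q (-l4) * t4⁻¹)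
                * (x : ℂ)⁻¹)) * g x

noncomputable def d2pp (q μ : ℝ) : ℂ :=
  qp q (-μ) + qp q μ - qp q (1/2) - qp q (-(1/2))

noncomputable def d2p (q h1 h2 h3 h4 l1 l2 l3 l4 : ℝ) (t1 t2 t3 t4 : ℂ) (μ : ℝ) : ℂ :=
  (qp q h1 + qp q l1 - qp q (h1 + 1/2 - μ) - qp q (l1 - 1/2 + μ)) * t1
    + (qp q h2 + qp q l2 - qp q (h2 + 1/2 - μ) - qp q (l2 - 1/2 + μ)) * t2
    + (qp q h3 + qp q l3 - qp q (h3 + 1/2 - μ) - qp q (l3 - 1/2 + μ)) * t3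
    + (qp q h4 + qp q l4 - qp q (h4 + 1/2 - μ) - qp q (l4 - 1/2 + μ)) * t4

noncomputable def d2z (q h1 h2 h3 h4 l1 l2 l3 l4 : ℝ) (t1 t2 t3 t4 : ℂ) (μ : ℝ) : ℂ :=
  (qp q (h1 + h2 + 1 - μ) + qp q (l1 + l2 - 1 + μ)) * t1 * t2
    + (qp q (h1 + h3 + 1 - μ) + qp q (l1 + l3 - 1 + μ)) * t1 * t3
    + (qp q (h1 + h4 + 1 - μ) + qp q (l1 + l4 - 1 + μ)) * t1 * t4
    + (qp q (h2 + h3 + 1 - μ) + qp q (l2 + l3 - 1 + μ)) * t2 * t3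
    + (qp q (h2 + h4 + 1 - μ) + qp q (l2 + l4 - 1 + μ)) * t2 * t4
    + (qp q (h3 + h4 + 1 - μ) + qp q (l3 + l4 - 1 + μ)) * t3 * t4

noncomputable def d2m (q h1 h2 h3 h4 l1 l2 l3 l4 : ℝ) (t1 t2 t3 t4 : ℂ) (μ : ℝ) : ℂ :=
  t1 * t2 * t3 * t4 *
    ((qp q ((h1 + h2 + h3 + h4 + l1 + l2 + l3 + l4) / 2) * (qp q (-h1) + qp q (-l1))
        - qp q (h1 + h2 + h3 + h4 + 3/2 - μ) * qp q (-h1)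
        - qp q (l1 + l2 + l3 + l4 - 3/2 + μ) * qp q (-l1)) * t1⁻¹
      + (qp q ((h1 + h2 + h3 + h4 + l1 + l2 + l3 + l4) / 2) * (qp q (-h2) + qp q (-l2))
        - qp q (h1 + h2 + h3 + h4 + 3/2 - μ) * qp q (-h2)
        - qp q (l1 + l2 + l3 + l4 - 3/2 + μ) * qp q (-l2)) * t2⁻¹
      + (qp q ((h1 + h2 + h3 + h4 + l1 + l2 + l3 + l4) / 2) * (qp q (-h3) + qp q (-l3))
        - qp q (h1 + h2 + h3 + h4 + 3/2 - μ) * qp q (-h3)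
        - qp q (l1 + l2 + l3 + l4 - 3/2 + μ) * qp q (-l3)) * t3⁻¹
      + (qp q ((h1 + h2 + h3 + h4 + l1 + l2 + l3 + l4) / 2) * (qp q (-h4) + qp q (-l4))
        - qp q (h1 + h2 + h3 + h4 + 3/2 - μ) * qp q (-h4)
        - qp q (l1 + l2 + l3 + l4 - 3/2 + μ) * qp q (-l4)) * t4⁻¹)

noncomputable def d2mm (q h1 h2 h3 h4 l1 l2 l3 l4 : ℝ) (t1 t2 t3 t4 : ℂ) (μ : ℝ) : ℂ :=
  (qp q (h1 + h2 + h3 + h4 + 2 - μ) + qp q (l1 + l2 + l3 + l4 - 2 + μ)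
      - qp q ((h1 + h2 + h3 + h4 + l1 + l2 + l3 + l4) / 2) * (qp q (1/2) + qp q (-(1/2))))
    * t1 * t2 * t3 * t4

/-!
Since `(x / q) ^ μ = q ^ (-μ) * x ^ μ` and `(q * x) ^ μ = q ^ μ * x ^ μ`, the power function is
mapped by `A²` to `x ^ μ` times a Laurent polynomial in `x`. Splitting every `q`-power into the
independent factors `q ^ (1/2)`, `q ^ μ`, `q ^ hᵢ`, `q ^ lᵢ` and `q ^ ((hᵢ + lᵢ) / 2)` turns the
claim into an identity of rational functions in these quantities, `x` and the `tᵢ`.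
-/

section QPower

variable {q : ℝ}

lemma qp_add (hq : 0 < q) (a b : ℝ) : qp q (a + b) = qp q a * qp q b := by
  simp only [qp, Real.rpow_add hq, Complex.ofReal_mul]

lemma qp_neg (hq : 0 < q) (a : ℝ) : qp q (-a) = (qp q a)⁻¹ := by
  simp only [qp, Real.rpow_neg hq.le, Complex.ofReal_inv]

lemma qp_sub (hq : 0 < q) (a b : ℝ) : qp q (a - b) = qp q a * (qp q b)⁻¹ := by
  rw [sub_eq_add_neg, qp_add hq, qp_neg hq]

lemma qp_natCast_mul (hq : 0 < q) (n : ℕ) (a : ℝ) : qp q (n * a) = qp q a ^ n := by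
  rw [qp, mul_comm, Real.rpow_mul_natCast hq.le, Complex.ofReal_pow, qp]

lemma qp_ne_zero (hq : 0 < q) (a : ℝ) : qp q a ≠ 0 :=
  Complex.ofReal_ne_zero.mpr (Real.rpow_pos_of_pos hq a).ne'

end QPower

theorem stmt6_general (q h1 h2 h3 h4 l1 l2 l3 l4 : ℝ) (hq : 0 < q)
    (t1 t2 t3 t4 : ℂ) (ht1 : t1 ≠ 0) (ht2 : t2 ≠ 0) (ht3 : t3 ≠ 0) (ht4 : t4 ≠ 0) (μ : ℝ) :
    ∀ x : ℝ, 0 < x →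
      A2 q h1 h2 h3 h4 l1 l2 l3 l4 t1 t2 t3 t4 (fun y : ℝ => ((y ^ μ : ℝ) : ℂ)) x
        = d2pp q μ * ((x ^ (μ + 2) : ℝ) : ℂ)
          + d2p q h1 h2 h3 h4 l1 l2 l3 l4 t1 t2 t3 t4 μ * ((x ^ (μ + 1) : ℝ) : ℂ)
          + d2z q h1 h2 h3 h4 l1 l2 l3 l4 t1 t2 t3 t4 μ * ((x ^ μ : ℝ) : ℂ)
          + d2m q h1 h2 h3 h4 l1 l2 l3 l4 t1 t2 t3 t4 μ * ((x ^ (μ - 1) : ℝ) : ℂ)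
          + d2mm q h1 h2 h3 h4 l1 l2 l3 l4 t1 t2 t3 t4 μ * ((x ^ (μ - 2) : ℝ) : ℂ) := by
  intro x hx
  have hsum_half : (h1 + h2 + h3 + h4 + l1 + l2 + l3 + l4) / 2
      = (h1 + l1) / 2 + (h2 + l2) / 2 + (h3 + l3) / 2 + (h4 + l4) / 2 := by ring
  have hone : qp q 1 = qp q (1 / 2) ^ 2 := by rw [← qp_natCast_mul hq]; norm_num
  have hthree_halves : qp q (3 / 2) = qp q (1 / 2) ^ 3 := by rw [← qp_natCast_mul hq]; norm_num
  have htwo : qp q 2 = qp q (1 / 2) ^ 4 := by rw [← qp_natCast_mul hq]; norm_num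
  simp only [A2, d2pp, d2p, d2z, d2m, d2mm, Real.div_rpow hx.le hq.le, Real.mul_rpow hq.le hx.le,
    Real.rpow_add hx, Real.rpow_sub hx, Real.rpow_one, Real.rpow_two, hsum_half,
    Complex.ofReal_mul, Complex.ofReal_div, Complex.ofReal_pow, ← qp.eq_1]
  -- `← qp.eq_1` refolded the pushed casts `↑(q ^ r)` into `qp q r`, so the `qp` lemmas now apply.
  simp only [qp_add hq, qp_sub hq, qp_neg hq, hone, hthree_halves, htwo]
  field_simp [qp_ne_zero hq, qp_ne_zero hx, Complex.ofReal_ne_zero.mpr hx.ne']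
  ring

theorem stmt6 (q h1 h2 h3 h4 l1 l2 l3 l4 : ℝ) (hq : 0 < q) (hq1 : q ≠ 1)
    (t1 t2 t3 t4 : ℂ) (ht1 : t1 ≠ 0) (ht2 : t2 ≠ 0) (ht3 : t3 ≠ 0) (ht4 : t4 ≠ 0) (μ : ℝ) :
    ∀ x : ℝ, 0 < x →
      A2 q h1 h2 h3 h4 l1 l2 l3 l4 t1 t2 t3 t4 (fun y : ℝ => ((y ^ μ : ℝ) : ℂ)) x
        = d2pp q μ * ((x ^ (μ + 2) : ℝ) : ℂ)
          + d2p q h1 h2 h3 h4 l1 l2 l3 l4 t1 t2 t3 t4 μ * ((x ^ (μ + 1) : ℝ) : ℂ)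
          + d2z q h1 h2 h3 h4 l1 l2 l3 l4 t1 t2 t3 t4 μ * ((x ^ μ : ℝ) : ℂ)
          + d2m q h1 h2 h3 h4 l1 l2 l3 l4 t1 t2 t3 t4 μ * ((x ^ (μ - 1) : ℝ) : ℂ)
          + d2mm q h1 h2 h3 h4 l1 l2 l3 l4 t1 t2 t3 t4 μ * ((x ^ (μ - 2) : ℝ) : ℂ) :=
  stmt6_general q h1 h2 h3 h4 l1 l2 l3 l4 hq t1 t2 t3 t4 ht1 ht2 ht3 ht4 μ
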